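/- Given an NCL structure and two feasible orientations o, o' that are NCL-reachable from one another, the assignments α(o) and α(o') are connected in G(Φ_G). -/
import Mathlib


open Finset

variable {V E : Type*}

/-- `e` is incident to `v` (as tail or head in the reference orientation). -/
def Incident (t h : E → V) (v : V) (e : E) : Prop :=
  t e = v ∨ h e = v

/-- The head of edge `e` under orientation `o` (`o e = true` means `e` keeps
its reference direction). -/
def headUnder (t h : E → V) (o : E → Bool) (e : E) : V :=
  if o e then h e else t e

/-- The structural axioms of an NCL instance: no self-loops, and every vertex is
incident to exactly three edges, which are either all blue, or one blue and two red. -/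
def NCLAxioms (t h : E → V) (blue : E → Bool) : Prop :=
  (∀ e, t e ≠ h e) ∧
    ∀ v : V, ∃ e₁ e₂ e₃ : E, e₁ ≠ e₂ ∧ e₁ ≠ e₃ ∧ e₂ ≠ e₃ ∧
      Incident t h v e₁ ∧ Incident t h v e₂ ∧ Incident t h v e₃ ∧
      (∀ e, Incident t h v e → e = e₁ ∨ e = e₂ ∨ e = e₃) ∧
      ((blue e₁ = true ∧ blue e₂ = true ∧ blue e₃ = true) ∨
        (blue e₁ = true ∧ blue e₂ = false ∧ blue e₃ = false))

/-- An orientation is feasible if every vertex has weighted in-degree at least two,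
where blue edges count with multiplicity `2` and red edges with multiplicity `1`. -/
def Feasible [Fintype E] [DecidableEq V] (t h : E → V) (blue : E → Bool)
    (o : E → Bool) : Prop :=
  ∀ v : V, 2 ≤ ∑ e ∈ Finset.univ.filter (fun e => headUnder t h o e = v),
    (if blue e then 2 else 1)

/-- The side of vertex `v` on edge `e`: `true` if `v` is the head, `false` otherwise. -/
def side (t h : E → V) [DecidableEq V] (v : V) (e : E) : Bool :=
  decide (h e = v)

/-- The monotone formula `Φ_G` on assignments `σ : E × Bool → Bool`. -/
def PhiG (t h : E → V) [DecidableEq V] (blue : E → Bool)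
    (σ : E × Bool → Bool) : Prop :=
  (∀ e : E, σ (e, true) = false ∨ σ (e, false) = false) ∧
  (∀ v : V, (∀ e, Incident t h v e → blue e = true) →
    ∃ e, Incident t h v e ∧ σ (e, side t h v e) = true) ∧
  (∀ v : V, ∀ bl r : E, Incident t h v bl → blue bl = true →
    Incident t h v r → blue r = false →
    (σ (bl, side t h v bl) = true ∨ σ (r, side t h v r) = true))

/-- The assignment `α(o)` associated to an orientation `o`:
`α(o)(e, true) = o e` and `α(o)(e, false) = ¬ o e`. -/
def alpha (o : E → Bool) : E × Bool → Bool :=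
  fun p => if p.2 then o p.1 else !o p.1

/-- Two satisfying assignments of `Φ` are connected in `G(Φ)`: there is a finite
sequence of assignments satisfying `Φ` from the first to the second in which
consecutive assignments differ in the value of exactly one variable. -/
def ConnectedIn {X : Type*} (Φ : (X → Bool) → Prop) (a b : X → Bool) : Prop :=
  ∃ (n : ℕ) (f : ℕ → X → Bool), f 0 = a ∧ f n = b ∧ (∀ i ≤ n, Φ (f i)) ∧
    ∀ i < n, ∃! x : X, f i x ≠ f (i + 1) x

/-- Two feasible orientations are NCL-reachable from one another: there is a finite
sequence of feasible orientations from the first to the second in which consecutive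
orientations differ on exactly one edge. -/
def NCLReachable [Fintype E] [DecidableEq V] (t h : E → V) (blue : E → Bool)
    (o o' : E → Bool) : Prop :=
  ∃ (n : ℕ) (f : ℕ → E → Bool), f 0 = o ∧ f n = o' ∧
    (∀ i ≤ n, Feasible t h blue (f i)) ∧
    ∀ i < n, ∃! e : E, f i e ≠ f (i + 1) e

/-- Midpoint assignment: pointwise AND of the two alpha assignments. -/
def mid (o1 o2 : E → Bool) : E × Bool → Bool :=
  fun p => alpha o1 p && alpha o2 p

lemma headUnder_incident {t h : E → V} {o : E → Bool} {v : V} {e : E}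
    (he : headUnder t h o e = v) : Incident t h v e := by
  unfold headUnder at he
  split at he
  · exact Or.inr he
  · exact Or.inl he

lemma alpha_side_iff [DecidableEq V] {t h : E → V} (ht : ∀ e, t e ≠ h e)
    (o : E → Bool) {v : V} {e : E} (hinc : Incident t h v e) :
    (alpha o (e, side t h v e) = true ↔ headUnder t h o e = v) := by
  rcases hinc with h1 | h2
  · by_cases hh : h e = v
    · exact absurd (h1.trans hh.symm) (ht e)
    · cases hob : o e <;> simp [alpha, side, headUnder, hh, hob, h1]
  · have hh : h e = v := h2
    have htv : t e ≠ v := fun htv => ht e (htv.trans hh.symm)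
    cases hob : o e <;> simp [alpha, side, headUnder, hh, hob, htv]

lemma exists_incoming [Fintype E] [DecidableEq V] {t h : E → V} {blue : E → Bool}
    {o : E → Bool} (ho : Feasible t h blue o) (v : V) :
    ∃ e, headUnder t h o e = v := by
  by_contra hc
  push_neg at hc
  have h2 := ho v
  have hemp : Finset.univ.filter (fun e => headUnder t h o e = v) = ∅ :=
    Finset.filter_eq_empty_iff.mpr (fun e _ => hc e)
  rw [hemp] at h2
  simp at h2

/-- Feasibility at a vertex with one blue and two red edges: the blue edge
is incoming, or each red edge is incoming. -/
lemma red_pair [Fintype E] [DecidableEq V] {t h : E → V} {blue : E → Bool}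
    {o : E → Bool} (ho : Feasible t h blue o)
    (hNCL : NCLAxioms t h blue) {v : V} {bl r : E}
    (hbl : Incident t h v bl) (hblb : blue bl = true)
    (hr : Incident t h v r) (hrb : blue r = false)
    (h1 : headUnder t h o bl ≠ v) (h2 : headUnder t h o r ≠ v) : False := by
  obtain ⟨e₁, e₂, e₃, h12, h13, h23, hi1, hi2, hi3, hall, hcol⟩ := hNCL.2 v
  rcases hcol with ⟨hb1, hb2, hb3⟩ | ⟨hb1, hb2, hb3⟩
  · rcases hall r hr with rfl | rfl | rfl <;> simp_all
  · -- bl = e₁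
    have hble : bl = e₁ := by
      rcases hall bl hbl with rfl | rfl | rfl
      · rfl
      · rw [hblb] at hb2; exact absurd hb2 (by simp)
      · rw [hblb] at hb3; exact absurd hb3 (by simp)
    have hre : r = e₂ ∨ r = e₃ := by
      rcases hall r hr with rfl | rfl | rfl
      · rw [hrb] at hb1; exact absurd hb1 (by simp)
      · exact Or.inl rfl
      · exact Or.inr rfl
    -- the other red edge
    obtain ⟨r', hr'b, hrr'⟩ : ∃ r', blue r' = false ∧ r' ≠ r ∧
        ∀ e, Incident t h v e → headUnder t h o e = v → e = r' := by
      rcases hre with rfl | rfl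
      · refine ⟨e₃, hb3, h23.symm, ?_⟩
        intro e hinc hhe
        rcases hall e hinc with rfl | rfl | rfl
        · exact absurd hhe (hble ▸ h1)
        · exact absurd hhe h2
        · rfl
      · refine ⟨e₂, hb2, h23, ?_⟩
        intro e hinc hhe
        rcases hall e hinc with rfl | rfl | rfl
        · exact absurd hhe (hble ▸ h1)
        · rfl
        · exact absurd hhe h2
    have hfeas := ho v
    have hsub : Finset.univ.filter (fun e => headUnder t h o e = v) ⊆ {r'} := by
      intro e he
      simp only [Finset.mem_filter] at he
      simp [hrr'.2 e (headUnder_incident he.2) he.2]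
    have hle := Finset.sum_le_sum_of_subset (f := fun e => if blue e then 2 else 1) hsub
    rw [Finset.sum_singleton] at hle
    simpa [hr'b] using hfeas.trans hle

/-- Key lemma: if a vertex's incoming edges (under a feasible orientation)
are all marked true by σ, then the vertex clauses of Φ hold at that vertex. -/
lemma clauses_at [Fintype E] [DecidableEq V] {t h : E → V} {blue : E → Bool}
    {o : E → Bool} (ho : Feasible t h blue o)
    (hNCL : NCLAxioms t h blue) (v : V) (σ : E × Bool → Bool)
    (hσ : ∀ e, Incident t h v e → headUnder t h o e = v →
      σ (e, side t h v e) = true) :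
    ((∀ e, Incident t h v e → blue e = true) →
      ∃ e, Incident t h v e ∧ σ (e, side t h v e) = true) ∧
    (∀ bl r : E, Incident t h v bl → blue bl = true →
      Incident t h v r → blue r = false →
      (σ (bl, side t h v bl) = true ∨ σ (r, side t h v r) = true)) := by
  constructor
  · intro _
    obtain ⟨e, he⟩ := exists_incoming ho v
    exact ⟨e, headUnder_incident he, hσ e (headUnder_incident he) he⟩
  · intro bl r hbl hblb hr hrb
    by_contra hc
    push_neg at hc
    have h1 : headUnder t h o bl ≠ v := fun hh =>
      by simp [hσ bl hbl hh] at hc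
    have h2 : headUnder t h o r ≠ v := fun hh =>
      by simp [hσ r hr hh] at hc
    exact red_pair ho hNCL hbl hblb hr hrb h1 h2

lemma phi_alpha [Fintype E] [DecidableEq V] {t h : E → V} {blue : E → Bool}
    {o : E → Bool} (hNCL : NCLAxioms t h blue) (ho : Feasible t h blue o) :
    PhiG t h blue (alpha o) := by
  refine ⟨fun e => ?_, fun v => ?_, fun v => ?_⟩
  · cases hob : o e <;> simp [alpha, hob]
  · exact (clauses_at ho hNCL v (alpha o)
      (fun e hinc hhe => (alpha_side_iff hNCL.1 o hinc).mpr hhe)).1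
  · exact (clauses_at ho hNCL v (alpha o)
      (fun e hinc hhe => (alpha_side_iff hNCL.1 o hinc).mpr hhe)).2

lemma phi_mid [Fintype E] [DecidableEq V] {t h : E → V} {blue : E → Bool}
    {o1 o2 : E → Bool} (hNCL : NCLAxioms t h blue)
    (ho1 : Feasible t h blue o1) (ho2 : Feasible t h blue o2)
    (e : E) (he : o1 e ≠ o2 e) (hd : ∀ e', e' ≠ e → o1 e' = o2 e') :
    PhiG t h blue (mid o1 o2) := by
  refine ⟨fun e' => ?_, fun v => ?_, fun v => ?_⟩
  · cases hob : o1 e' <;> simp [mid, alpha, hob]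
  all_goals {
    -- pick the orientation under which e is not incoming to v
    have hkey : ∃ o, Feasible t h blue o ∧ headUnder t h o e ≠ v ∧
        ∀ e', e' ≠ e → headUnder t h o e' = headUnder t h o1 e' ∧
          alpha o (e', side t h v e') = mid o1 o2 (e', side t h v e') := by
      have heq : ∀ e', e' ≠ e → ∀ s, alpha o1 (e', s) = alpha o2 (e', s) := by
        intro e' he' s
        simp [alpha, hd e' he']
      by_cases hc : headUnder t h o1 e = v
      · have hne2 : headUnder t h o2 e ≠ v := by
          intro hc2
          unfold headUnder at hc hc2
          rcases hob1 : o1 e <;> rcases hob2 : o2 e <;>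
            simp [hob1, hob2] at hc hc2 he
          · first
            | exact hNCL.1 e (hc2.trans hc.symm)
            | exact hNCL.1 e (hc.trans hc2.symm)
          · first
            | exact hNCL.1 e (hc2.trans hc.symm)
            | exact hNCL.1 e (hc.trans hc2.symm)
        refine ⟨o2, ho2, hne2, fun e' he' => ⟨?_, ?_⟩⟩
        · simp [headUnder, hd e' he']
        · simp [mid, heq e' he', Bool.and_self]
      · refine ⟨o1, ho1, hc, fun e' he' => ⟨rfl, ?_⟩⟩
        simp [mid, heq e' he', Bool.and_self]
    obtain ⟨o, ho, hne, hrest⟩ := hkey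
    have hσ : ∀ e', Incident t h v e' → headUnder t h o e' = v →
        mid o1 o2 (e', side t h v e') = true := by
      intro e' hinc hhe
      have he'e : e' ≠ e := fun hh => hne (hh ▸ hhe)
      rw [← (hrest e' he'e).2]
      exact (alpha_side_iff hNCL.1 o hinc).mpr hhe
    first
    | exact (clauses_at ho hNCL v (mid o1 o2) hσ).1
    | exact (clauses_at ho hNCL v (mid o1 o2) hσ).2
  }

lemma diff_alpha_mid {o1 o2 : E → Bool} (e : E) (he : o1 e ≠ o2 e)
    (hd : ∀ e', e' ≠ e → o1 e' = o2 e') :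
    ∃! x : E × Bool, alpha o1 x ≠ mid o1 o2 x := by
  refine ⟨(e, o1 e), ?_, ?_⟩
  · cases hob1 : o1 e <;> cases hob2 : o2 e <;>
      simp [hob1, hob2, alpha, mid] at he ⊢
  · rintro ⟨e', s⟩ hx
    have he'e : e' = e := by
      by_contra hc
      have hob2 : o2 e' = o1 e' := (hd e' hc).symm
      simp [alpha, mid, hob2, Bool.and_self] at hx
    subst he'e
    cases hob1 : o1 e' <;> cases hob2 : o2 e' <;> cases s <;>
      simp [hob1, hob2, alpha, mid] at he hx ⊢

lemma diff_mid_alpha {o1 o2 : E → Bool} (e : E) (he : o1 e ≠ o2 e)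
    (hd : ∀ e', e' ≠ e → o1 e' = o2 e') :
    ∃! x : E × Bool, mid o1 o2 x ≠ alpha o2 x := by
  have hmc : mid o1 o2 = mid o2 o1 := by
    funext p; simp [mid, Bool.and_comm]
  rw [hmc]
  have := diff_alpha_mid (o1 := o2) (o2 := o1) e (Ne.symm he)
    (fun e' he' => (hd e' he').symm)
  simpa [ne_comm] using this

theorem stmt_14 [Fintype E] [DecidableEq V] (t h : E → V) (blue : E → Bool)
    (hNCL : NCLAxioms t h blue) (o o' : E → Bool)
    (ho : Feasible t h blue o) (ho' : Feasible t h blue o')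
    (hreach : NCLReachable t h blue o o') :
    ConnectedIn (PhiG t h blue) (alpha o) (alpha o') := by
  obtain ⟨n, f, hf0, hfn, hfeas, hdiff⟩ := hreach
  refine ⟨2 * n, fun j => if j % 2 = 0 then alpha (f (j / 2))
    else mid (f (j / 2)) (f (j / 2 + 1)), ?_, ?_, ?_, ?_⟩
  · simp [hf0]
  · simp [Nat.mul_div_cancel_left, hfn]
  · intro j hj
    rcases Nat.even_or_odd j with ⟨i, hi⟩ | ⟨i, hi⟩
    · have hj2 : j % 2 = 0 := by omega
      have hd2 : j / 2 = i := by omega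
      simp only [hj2, hd2, if_pos rfl]
      exact phi_alpha hNCL (hfeas i (by omega))
    · have hj2 : j % 2 ≠ 0 := by omega
      have hd2 : j / 2 = i := by omega
      have hin : i < n := by omega
      simp only [hj2, hd2, if_neg hj2]
      obtain ⟨e, he, huniq⟩ := hdiff i hin
      refine phi_mid hNCL (hfeas i (by omega)) (hfeas (i + 1) (by omega)) e
        (by simpa using he) ?_
      intro e' he'
      by_contra hc
      exact he' (huniq e' hc)
  · intro j hj
    rcases Nat.even_or_odd j with ⟨i, hi⟩ | ⟨i, hi⟩
    · have hj2 : j % 2 = 0 := by omega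
      have hj12 : (j + 1) % 2 ≠ 0 := by omega
      have hd2 : j / 2 = i := by omega
      have hd12 : (j + 1) / 2 = i := by omega
      have hin : i < n := by omega
      simp only [hj2, hj12, hd2, hd12, if_pos rfl, if_neg hj12]
      obtain ⟨e, he, huniq⟩ := hdiff i hin
      exact diff_alpha_mid e he (fun e' he' => by
        by_contra hc; exact he' (huniq e' hc))
    · have hj2 : j % 2 ≠ 0 := by omega
      have hj12 : (j + 1) % 2 = 0 := by omega
      have hd2 : j / 2 = i := by omega
      have hd12 : (j + 1) / 2 = i + 1 := by omega
      have hin : i < n := by omega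
      simp only [hj2, hj12, hd2, hd12, if_neg hj2, if_pos hj12]
      obtain ⟨e, he, huniq⟩ := hdiff i hin
      exact diff_mid_alpha e he (fun e' he' => by
        by_contra hc; exact he' (huniq e' hc))
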